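/- Let n ≥ 2, let s : Fin n → ℝ be injective (no ties in scores), and let ỹ : Fin n → ℝ be a bijection onto {1, 2, …, n}. Define the predicted rank r̂_i = 1 + #{j ≠ i : s_i < s_j} and ρ = 12·(Σ_{i=1}^{n} r̂_i ỹ_i − n·((n+1)/2)²) / (n(n² − 1)). Then 1 − ρ = (12 / (n(n² − 1))) · Σ_{(i,j) : ỹ_i < ỹ_j} (ỹ_j − ỹ_i)·[s_i < s_j], where the sum is over all ordered pairs (i, j) with ỹ_i < ỹ_j and [P] is the indicator equal to 1 if P holds and 0 otherwise. -/

import Mathlib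

/-!
Since neither the scores nor the labels have ties, for `i ≠ j` we have
`[y j < y i] - [s i < s j] = c j i - c i j` with `c i j = [y i < y j ∧ s i < s j]`.
Summing against `y i` and antisymmetrising turns
`∑ i, y i * (#{j | y j < y i} - #{j | s i < s j}) = ∑ i, y i * (y i - r̂ i)` into the weighted
count `∑ c i j * (y j - y i)` of discordant pairs. What remains is `∑ i, y i ^ 2 = n(n+1)(2n+1)/6`,
which is exactly what cancels the constant term of `ρ`.
-/

open Finset

section Discordance

variable {ι α : Type*} [LinearOrder α] {s : ι → α} {y : ι → ℝ}

lemma ite_lt_sub_ite_lt_of_injective (hs : Function.Injective s) (hy : Function.Injective y)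
    (i j : ι) :
    (if y j < y i then (1 : ℝ) else 0) - (if s i < s j then 1 else 0)
      = (if y j < y i ∧ s j < s i then 1 else 0) - (if y i < y j ∧ s i < s j then 1 else 0) := by
  rcases eq_or_ne i j with rfl | hij
  · simp
  rcases (hs.ne hij).lt_or_gt with h | h <;> rcases (hy.ne hij).lt_or_gt with h' | h' <;>
    simp [h, h', h.not_gt, h'.not_gt]

theorem sum_discordant_pairs_eq_sum_mul_card_sub_card [Fintype ι]
    (hs : Function.Injective s) (hy : Function.Injective y) :
    ∑ p ∈ univ.filter fun p : ι × ι => y p.1 < y p.2,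
        (y p.2 - y p.1) * (if s p.1 < s p.2 then (1 : ℝ) else 0)
      = ∑ i, y i * ((#{j | y j < y i} : ℝ) - #{j | s i < s j}) := by
  set c : ι → ι → ℝ := fun i j => if y i < y j ∧ s i < s j then 1 else 0
  calc _ = ∑ i, ∑ j, c i j * (y j - y i) := by
        rw [sum_filter, Fintype.sum_prod_type]
        refine sum_congr rfl fun i _ => sum_congr rfl fun j _ => ?_
        by_cases h : y i < y j <;> by_cases h' : s i < s j <;> simp [c, h, h']
    _ = ∑ i, ∑ j, y i * (c j i - c i j) := by
        simp only [mul_sub, sum_sub_distrib]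
        rw [sum_comm]
        simp only [mul_comm]
    _ = _ := by
        simp only [natCast_card_filter, ← sum_sub_distrib, mul_sum, c,
          ite_lt_sub_ite_lt_of_injective hs hy]

end Discordance

lemma card_filter_perm_lt {n : ℕ} (σ : Equiv.Perm (Fin n)) (i : Fin n) :
    #{j | σ j < σ i} = σ i := by
  rw [card_equiv σ (t := {b | b < σ i}) (by simp), filter_gt_eq_Iio, Fin.card_Iio]

lemma sum_range_add_one_sq (n : ℕ) :
    ∑ k ∈ range n, ((k : ℝ) + 1) ^ 2 = (n : ℝ) * (n + 1) * (2 * n + 1) / 6 := by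
  induction n with
  | zero => simp
  | succ m ih => rw [sum_range_succ, ih]; push_cast; ring

lemma sum_perm_add_one_sq {n : ℕ} (σ : Equiv.Perm (Fin n)) :
    ∑ i, (((σ i : ℕ) : ℝ) + 1) ^ 2 = (n : ℝ) * (n + 1) * (2 * n + 1) / 6 := by
  rw [Equiv.sum_comp σ (fun b : Fin n => (((b : ℕ) : ℝ) + 1) ^ 2),
    Fin.sum_univ_eq_sum_range (fun k => ((k : ℝ) + 1) ^ 2), sum_range_add_one_sq]

/-- Proposition 2 (the RankIC loss identity):
`1 − ρ = (12/(n(n²−1))) Σ_{ỹ_i < ỹ_j} (ỹ_j − ỹ_i)·[s_i < s_j]`. -/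
theorem one_sub_rankIC_eq (n : ℕ) (hn : 2 ≤ n) (s : Fin n → ℝ)
    (hs : Function.Injective s) (y : Fin n → ℝ)
    (hy : ∃ σ : Equiv.Perm (Fin n), ∀ i, y i = ((σ i : ℕ) : ℝ) + 1) :
    1 - 12 * ((∑ i, (1 + ((univ.filter fun j => j ≠ i ∧ s i < s j).card : ℝ)) * y i)
            - n * (((n : ℝ) + 1) / 2) ^ 2) / (n * ((n : ℝ) ^ 2 - 1))
      = 12 / (n * ((n : ℝ) ^ 2 - 1)) *
          ∑ p ∈ univ.filter fun p : Fin n × Fin n => y p.1 < y p.2,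
            (y p.2 - y p.1) * (if s p.1 < s p.2 then (1 : ℝ) else 0) := by
  obtain ⟨σ, rfl⟩ : ∃ σ : Equiv.Perm (Fin n), y = fun i => ((σ i : ℕ) : ℝ) + 1 :=
    hy.imp fun _ h => funext h
  have hy : Function.Injective fun i => ((σ i : ℕ) : ℝ) + 1 := fun i j h =>
    σ.injective (Fin.ext (by simpa using h))
  have hrank : ∀ i, #{j | j ≠ i ∧ s i < s j} = #{j | s i < s j} := fun i =>
    congrArg card (filter_congr fun j _ => and_iff_right_of_imp fun h hji => (hji ▸ h).false)
  have hcount : ∀ i, #{j | ((σ j : ℕ) : ℝ) + 1 < ((σ i : ℕ) : ℝ) + 1} = σ i := fun i => by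
    simpa using card_filter_perm_lt σ i
  have hsplit : ∑ i, (((σ i : ℕ) : ℝ) + 1) * (((σ i : ℕ) : ℝ) - #{j | s i < s j})
      = ∑ i, (((σ i : ℕ) : ℝ) + 1) ^ 2
        - ∑ i, (1 + (#{j | s i < s j} : ℝ)) * (((σ i : ℕ) : ℝ) + 1) := by
    rw [← sum_sub_distrib]; congr 1; ext i; ring
  rw [sum_discordant_pairs_eq_sum_mul_card_sub_card hs hy]
  simp only [hrank, hcount]
  rw [hsplit, sum_perm_add_one_sq]
  have hn' : (2 : ℝ) ≤ n := by exact_mod_cast hn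
  have hn0 : (n : ℝ) ≠ 0 := by positivity
  have hn1 : (n : ℝ) ^ 2 - 1 ≠ 0 := by nlinarith
  field_simp
  ring
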